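/- For even n ≥ 6 and each 3 ≤ j ≤ n-1, the lobster tree A displays the character φ_j, where φ_j = X_{≤j-3} ∪ {b_{j-2}, b_{j-1}} | a_{j-2} | a_{j-1} | b_j | b_{j+1} | {a_j, a_{j+1}} ∪ X_{≥j+2} if j is even, and φ_j = X_{≤j-3} ∪ {a_{j-2}, a_{j-1}} | b_{j-2} | b_{j-1} | a_j | a_{j+1} | {b_j, b_{j+1}} ∪ X_{≥j+2} if j is odd. -/

import Mathlib

/-! Apart from the two large states `0` and `5`, every state of `φ_j` is a single leaf. Give the
internal vertices `uₘ, vₘ` of `A` state `0` if `m < j` and state `5` otherwise. A leaf of state `0`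
hangs (directly or through `vₘ`) from a spine vertex `uₘ` with `m < j`, so it reaches `u₁` inside the
vertices of state `0`; likewise a leaf of state `5` reaches `uₙ₋₁` inside the vertices of state `5`.
In a tree the path between two vertices lies in every connected set containing both, so the minimal
subtree of each state stays among the vertices of that state, and these sets are disjoint. -/

namespace PP

/-- A vertex is a leaf (degree at most one) if it has at most one neighbour. -/
def IsLeafVert {V : Type} (G : SimpleGraph V) (w : V) : Prop :=
  ∀ w₁ w₂ : V, G.Adj w w₁ → G.Adj w w₂ → w₁ = w₂

/-- A (finite, unrooted) phylogenetic tree on a label set `X ⊆ L`: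
its leaves are bijectively labelled by the elements of `X`. -/
structure PhyloTree {L : Type} (X : Set L) where
  V : Type
  finV : Finite V
  G : SimpleGraph V
  isTree : G.IsTree
  leaf : L → V
  leaf_injOn : Set.InjOn leaf X
  leaf_isLeaf : ∀ x ∈ X, IsLeafVert G (leaf x)
  leaf_surj : ∀ w, IsLeafVert G w → ∃ x ∈ X, leaf x = w

/-- The vertex set of the minimal subtree `T[S]` spanning the leaves labelled by `S ∩ X`. -/
def subtree {L : Type} {X : Set L} (T : PhyloTree X) (S : Set L) : Set T.V :=
  {w | ∃ x ∈ S ∩ X, ∃ y ∈ S ∩ X,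
        ∃ p : T.G.Walk (T.leaf x) (T.leaf y), p.IsPath ∧ w ∈ p.support}

/-- `T` displays the character `χ` (a state assignment, whose nonempty fibres on `X`
are the states) if the minimal subtrees spanning distinct states are vertex-disjoint. -/
def displays {L : Type} {X : Set L} (T : PhyloTree X) (χ : L → ℕ) : Prop :=
  ∀ s t : ℕ, s ≠ t → Disjoint (subtree T {x | χ x = s}) (subtree T {x | χ x = t})

/-- A set of characters is compatible if some tree on `X` displays all of them. -/
def compatible {L : Type} (X : Set L) (C : Set (L → ℕ)) : Prop :=
  ∃ T : PhyloTree X, ∀ χ ∈ C, displays T χ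

/-- Labels: `(false, i)` is `aᵢ`, `(true, i)` is `bᵢ`. -/
abbrev Lbl : Type := Bool × ℕ

def a (i : ℕ) : Lbl := (false, i)
def b (i : ℕ) : Lbl := (true, i)

/-- `X = {a₁,…,aₙ,b₁,…,bₙ}`. -/
def Xset (n : ℕ) : Set Lbl := {p | 1 ≤ p.2 ∧ p.2 ≤ n}

/-- `X_{≤ i} = {aⱼ, bⱼ : 1 ≤ j ≤ i}`. -/
def XLE (i : ℕ) : Set Lbl := {p | 1 ≤ p.2 ∧ p.2 ≤ i}

/-- χ_j = X_{≤j-2} | a_{j-1} | b_{j-1} | a_j a_{j+1} | b_j b_{j+1} | a_{j+2} | b_{j+2} | X_{≥j+3} -/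
def chi (j : ℕ) : Lbl → ℕ := fun p =>
  if p.2 + 2 ≤ j then 0
  else if p.2 + 1 = j then cond p.1 2 1
  else if p.2 ≤ j + 1 then cond p.1 4 3
  else if p.2 = j + 2 then cond p.1 6 5
  else 7

def phiMain (j i : ℕ) : ℕ :=
  if i < j then 0 else if i = j then 3 else if i = j + 1 then 4 else 5

def phiSide (j i : ℕ) : ℕ :=
  if i + 3 ≤ j then 0 else if i + 2 = j then 1 else if i + 1 = j then 2 else 5

/-- For even j: φ_j = X_{≤j-3}∪{b_{j-2},b_{j-1}} | a_{j-2} | a_{j-1} | b_j | b_{j+1} | {a_j,a_{j+1}}∪X_{≥j+2};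
for odd j the roles of a and b are swapped. -/
def phi (j : ℕ) : Lbl → ℕ := fun p =>
  if j % 2 = 0 then cond p.1 (phiMain j p.2) (phiSide j p.2)
  else cond p.1 (phiSide j p.2) (phiMain j p.2)

/-- Ω_A = a₁b₁b₂ | {a₂} ∪ X_{≥3}. -/
def OmA : Lbl → ℕ := fun p =>
  cond p.1 (if p.2 ≤ 2 then 0 else 1) (if p.2 = 1 then 0 else 1)

/-- Ω_B = X_{≤n-2} ∪ {b_{n-1}} | a_{n-1} aₙ bₙ. -/
def OmB (n : ℕ) : Lbl → ℕ := fun p =>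
  cond p.1 (if p.2 = n then 1 else 0) (if p.2 + 1 ≥ n then 1 else 0)

/-- The edges of the lobster `A`: central path a₁,u₁,…,u_{n-1},aₙ; edges uᵢvᵢ;
for odd i, vᵢ is adjacent to bᵢ and b_{i+1}; for even i, vᵢ is adjacent to aᵢ and a_{i+1}. -/
def AdjSpecA (n : ℕ) {X : Set Lbl} (T : PhyloTree X) (u v : ℕ → T.V) (w w' : T.V) : Prop :=
  (w = T.leaf (a 1) ∧ w' = u 1) ∨
  (∃ i, 1 ≤ i ∧ i + 1 ≤ n - 1 ∧ w = u i ∧ w' = u (i + 1)) ∨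
  (w = u (n - 1) ∧ w' = T.leaf (a n)) ∨
  (∃ i, 1 ≤ i ∧ i ≤ n - 1 ∧ w = u i ∧ w' = v i) ∨
  (∃ i, 1 ≤ i ∧ i ≤ n - 1 ∧ i % 2 = 1 ∧ w = v i ∧
      (w' = T.leaf (b i) ∨ w' = T.leaf (b (i + 1)))) ∨
  (∃ i, 1 ≤ i ∧ i ≤ n - 1 ∧ i % 2 = 0 ∧ w = v i ∧
      (w' = T.leaf (a i) ∨ w' = T.leaf (a (i + 1))))

/-- `T`, with internal vertices `u i`, `v i` (1 ≤ i ≤ n-1), is the lobster `A`. -/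
def IsLobsterA (n : ℕ) (T : PhyloTree (Xset n)) (u v : ℕ → T.V) : Prop :=
  (∀ i j, 1 ≤ i → i ≤ n - 1 → 1 ≤ j → j ≤ n - 1 →
      (u i = u j → i = j) ∧ (v i = v j → i = j) ∧ u i ≠ v j) ∧
  (∀ p ∈ Xset n, ∀ i, 1 ≤ i → i ≤ n - 1 → T.leaf p ≠ u i ∧ T.leaf p ≠ v i) ∧
  (∀ w : T.V, (∃ p ∈ Xset n, T.leaf p = w) ∨
      (∃ i, 1 ≤ i ∧ i ≤ n - 1 ∧ (u i = w ∨ v i = w))) ∧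
  (∀ w w' : T.V, T.G.Adj w w' ↔ (AdjSpecA n T u v w w' ∨ AdjSpecA n T u v w' w))

end PP

namespace SimpleGraph

variable {V : Type*} {G : SimpleGraph V}

theorem IsAcyclic.support_subset_of_isPath (hG : G.IsAcyclic) {x y : V} {p : G.Walk x y}
    (hp : p.IsPath) (q : G.Walk x y) : p.support ⊆ q.support := by
  classical
  have hpq : p = q.bypass :=
    congrArg Subtype.val ((hG.subsingleton_path x y).elim ⟨p, hp⟩ ⟨q.bypass, q.bypass_isPath⟩)
  rw [hpq]
  exact q.support_bypass_subset_support

theorem exists_walk_of_adj_succ (f : ℕ → V) {m m' : ℕ}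
    (hadj : ∀ k, min m m' ≤ k → k < max m m' → G.Adj (f k) (f (k + 1))) :
    ∃ q : G.Walk (f m) (f m'), ∀ w ∈ q.support, w ∈ f '' Set.uIcc m m' := by
  have forward : ∀ lo hi, lo ≤ hi → (∀ k, lo ≤ k → k < hi → G.Adj (f k) (f (k + 1))) →
      ∃ q : G.Walk (f lo) (f hi), ∀ w ∈ q.support, w ∈ f '' Set.Icc lo hi := by
    intro lo hi hle hadj
    induction hi, hle using Nat.le_induction with
    | base => exact ⟨Walk.nil, fun w hw => ⟨lo, ⟨le_rfl, le_rfl⟩, (List.mem_singleton.mp hw).symm⟩⟩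
    | succ k hk ih =>
      obtain ⟨q, hq⟩ := ih fun l hl hlk => hadj l hl (by omega)
      refine ⟨q.concat (hadj k hk (by omega)), fun w hw => ?_⟩
      rw [Walk.support_concat, List.mem_append, List.mem_singleton] at hw
      rcases hw with hw | rfl
      · obtain ⟨l, hl, rfl⟩ := hq w hw
        exact ⟨l, ⟨hl.1, hl.2.trans k.le_succ⟩, rfl⟩
      · exact ⟨k + 1, ⟨by omega, le_rfl⟩, rfl⟩
  rcases le_total m m' with h | h
  · obtain ⟨q, hq⟩ := forward m m' h fun k hk hk' => hadj k (by omega) (by omega)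
    exact ⟨q, by rwa [Set.uIcc_of_le h]⟩
  · obtain ⟨q, hq⟩ := forward m' m h fun k hk hk' => hadj k (by omega) (by omega)
    refine ⟨q.reverse, fun w hw => ?_⟩
    rw [Walk.support_reverse, List.mem_reverse] at hw
    exact Set.uIcc_of_ge h ▸ hq w hw

end SimpleGraph

namespace PP

open Function SimpleGraph

section PhyloTree

variable {L : Type} {X : Set L} (T : PhyloTree X)

theorem subtree_subset_of_forall_walk {S : Set L} {C : Set T.V} (c : T.V)
    (h : ∀ x ∈ S ∩ X, ∃ q : T.G.Walk (T.leaf x) c, ∀ w ∈ q.support, w ∈ C) :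
    subtree T S ⊆ C := by
  rintro w ⟨x, hx, y, hy, p, hp, hw⟩
  obtain ⟨qx, hqx⟩ := h x hx
  obtain ⟨qy, hqy⟩ := h y hy
  have hw' := T.isTree.isAcyclic.support_subset_of_isPath hp (qx.append qy.reverse) hw
  rw [Walk.mem_support_append_iff, Walk.support_reverse, List.mem_reverse] at hw'
  exact hw'.elim (hqx w) (hqy w)

theorem subtree_subset_image_of_subsingleton {S : Set L} (hS : (S ∩ X).Subsingleton) :
    subtree T S ⊆ T.leaf '' (S ∩ X) := by
  rintro w ⟨x, hx, y, hy, p, hp, hw⟩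
  obtain rfl := hS hx hy
  rw [Walk.isPath_iff_nil.mp hp |>.eq_nil] at hw
  exact ⟨x, hx, (List.mem_singleton.mp hw).symm⟩

theorem displays_of_subtree_subset {χ : L → ℕ} (C : ℕ → Set T.V)
    (hC : Pairwise (Disjoint on C)) (hsub : ∀ s, subtree T {x | χ x = s} ⊆ C s) :
    displays T χ :=
  fun s t hst => (hC hst).mono (hsub s) (hsub t)

end PhyloTree

/-- The index `m` of the spine vertex `uₘ` nearest to a leaf: `a₁` and `aₙ` hang from `u₁` and
`uₙ₋₁`, every other leaf hangs from `vₘ`, where `m` is odd for `b`-leaves and even for `a`-leaves. -/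
def spineIndex (n : ℕ) : Lbl → ℕ
  | (false, i) => if i = 1 then 1 else if i = n then n - 1 else i - i % 2
  | (true, i) => i - (i + 1) % 2

theorem spineIndex_mem {n : ℕ} (hn : Even n) {x : Lbl} (hx : x ∈ Xset n) :
    1 ≤ spineIndex n x ∧ spineIndex n x ≤ n - 1 := by
  obtain ⟨t, i⟩ := x
  obtain ⟨hi1, hin⟩ := hx
  rw [Nat.even_iff] at hn
  cases t
  · simp only [spineIndex]
    split_ifs <;> omega
  · simp only [spineIndex]
    omega

theorem spineIndex_lt_of_phi_eq_zero {n j : ℕ} {x : Lbl} (hx : x ∈ Xset n) (h : phi j x = 0) :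
    spineIndex n x < j := by
  obtain ⟨t, i⟩ := x
  obtain ⟨hi1, hin⟩ := hx
  cases t <;> simp only [spineIndex, phi, phiMain, phiSide, cond_true, cond_false] at * <;>
    split_ifs at * <;> omega

theorem le_spineIndex_of_phi_eq_five {n j : ℕ} (hj : j ≤ n - 1) {x : Lbl} (hx : x ∈ Xset n)
    (h : phi j x = 5) : j ≤ spineIndex n x := by
  obtain ⟨t, i⟩ := x
  obtain ⟨hi1, hin⟩ := hx
  cases t <;> simp only [spineIndex, phi, phiMain, phiSide, cond_true, cond_false] at * <;>
    split_ifs at * <;> omega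

theorem phi_fiber_subsingleton {j s : ℕ} (h0 : s ≠ 0) (h5 : s ≠ 5) :
    {x | phi j x = s}.Subsingleton := by
  rintro ⟨t, i⟩ hx ⟨t', i'⟩ hx'
  simp only [Set.mem_ofPred_eq] at hx hx'
  cases t <;> cases t' <;> simp only [phi, phiMain, phiSide, cond_true, cond_false] at hx hx' <;>
    split_ifs at hx hx' <;> simp only [Prod.mk.injEq, true_and, reduceCtorEq, false_and] <;> omega

section Lobster

variable {n : ℕ} {T : PhyloTree (Xset n)} {u v : ℕ → T.V}

theorem IsLobsterA.adj_of_adjSpecA (hA : IsLobsterA n T u v) {w w' : T.V}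
    (h : AdjSpecA n T u v w w') : T.G.Adj w w' :=
  (hA.2.2.2 w w').mpr (Or.inl h)

theorem IsLobsterA.adj_v_leaf (hA : IsLobsterA n T u v) (t : Bool) {m i : ℕ} (hm1 : 1 ≤ m)
    (hmn : m ≤ n - 1) (hpar : m % 2 = t.toNat) (hi : i = m ∨ i = m + 1) :
    T.G.Adj (v m) (T.leaf (t, i)) := by
  apply hA.adj_of_adjSpecA
  cases t
  · exact Or.inr (Or.inr (Or.inr (Or.inr (Or.inr ⟨m, hm1, hmn, hpar, rfl, by
      rcases hi with rfl | rfl <;> simp [a]⟩))))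
  · exact Or.inr (Or.inr (Or.inr (Or.inr (Or.inl ⟨m, hm1, hmn, hpar, rfl, by
      rcases hi with rfl | rfl <;> simp [b]⟩))))

theorem IsLobsterA.adj_leaf_spine (hA : IsLobsterA n T u v) (hn : Even n) {x : Lbl}
    (hx : x ∈ Xset n) :
    T.G.Adj (T.leaf x) (u (spineIndex n x)) ∨ T.G.Adj (T.leaf x) (v (spineIndex n x)) := by
  obtain ⟨hm1, hmn⟩ := spineIndex_mem hn hx
  obtain ⟨t, i⟩ := x
  obtain ⟨hi1, hin⟩ := hx
  rw [Nat.even_iff] at hn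
  cases t with
  | false =>
    by_cases h1 : i = 1
    · subst h1
      exact Or.inl (hA.adj_of_adjSpecA (Or.inl ⟨rfl, rfl⟩))
    by_cases hi : i = n
    · subst hi
      have hm : spineIndex i (false, i) = i - 1 := by simp [spineIndex, h1]
      rw [hm]
      exact Or.inl (hA.adj_of_adjSpecA (Or.inr (Or.inr (Or.inl ⟨rfl, rfl⟩)))).symm
    · have hm : spineIndex n (false, i) = i - i % 2 := by simp [spineIndex, h1, hi]
      rw [hm] at hm1 hmn ⊢
      exact Or.inr (hA.adj_v_leaf false hm1 hmn (by rw [Bool.toNat_false]; omega) (by omega)).symm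
  | true =>
    simp only [spineIndex] at hm1 hmn ⊢
    exact Or.inr (hA.adj_v_leaf true hm1 hmn (by rw [Bool.toNat_true]; omega) (by omega)).symm

theorem IsLobsterA.exists_walk_leaf_u (hA : IsLobsterA n T u v) (hn : Even n) {x : Lbl}
    (hx : x ∈ Xset n) {k : ℕ} (hk1 : 1 ≤ k) (hkn : k ≤ n - 1) :
    ∃ q : T.G.Walk (T.leaf x) (u k), ∀ w ∈ q.support,
      w = T.leaf x ∨ w = v (spineIndex n x) ∨ w ∈ u '' Set.uIcc (spineIndex n x) k := by
  obtain ⟨hm1, hmn⟩ := spineIndex_mem hn hx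
  obtain ⟨spine, hspine⟩ := exists_walk_of_adj_succ (G := T.G) u (m := spineIndex n x) (m' := k)
    fun l hl hl' => hA.adj_of_adjSpecA (Or.inr (Or.inl ⟨l, by omega, by omega, rfl, rfl⟩))
  rcases hA.adj_leaf_spine hn hx with h | h
  · refine ⟨Walk.cons h spine, fun w hw => ?_⟩
    rw [Walk.support_cons, List.mem_cons] at hw
    rcases hw with rfl | hw
    exacts [Or.inl rfl, Or.inr (Or.inr (hspine w hw))]
  · have huv : T.G.Adj (u (spineIndex n x)) (v (spineIndex n x)) :=
      hA.adj_of_adjSpecA (Or.inr (Or.inr (Or.inr (Or.inl ⟨_, hm1, hmn, rfl, rfl⟩))))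
    refine ⟨Walk.cons h (Walk.cons huv.symm spine), fun w hw => ?_⟩
    simp only [Walk.support_cons, List.mem_cons] at hw
    rcases hw with rfl | rfl | hw
    exacts [Or.inl rfl, Or.inr (Or.inl rfl), Or.inr (Or.inr (hspine w hw))]

def phiRegion (n j : ℕ) (T : PhyloTree (Xset n)) (u v : ℕ → T.V) (s : ℕ) : Set T.V :=
  T.leaf '' ({x | phi j x = s} ∩ Xset n) ∪
    {w | ∃ m, 1 ≤ m ∧ m ≤ n - 1 ∧ (w = u m ∨ w = v m) ∧ (if m < j then 0 else 5) = s}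

theorem IsLobsterA.pairwise_disjoint_phiRegion (hA : IsLobsterA n T u v) (j : ℕ) :
    Pairwise (Disjoint on phiRegion n j T u v) := by
  obtain ⟨hinj, hleaf, -, -⟩ := hA
  intro s t hst
  rw [onFun, Set.disjoint_left]
  rintro w (⟨x, ⟨hxs, hx⟩, rfl⟩ | ⟨m, hm1, hmn, hw, hms⟩)
    (⟨y, ⟨hyt, hy⟩, hxy⟩ | ⟨m', hm1', hmn', hw', hmt⟩)
  · exact hst (hxs ▸ hyt ▸ congrArg (phi j) (T.leaf_injOn hx hy hxy.symm))
  · rcases hw' with h | h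
    exacts [(hleaf x hx m' hm1' hmn').1 h, (hleaf x hx m' hm1' hmn').2 h]
  · rcases hw with rfl | rfl
    exacts [(hleaf y hy m hm1 hmn).1 hxy, (hleaf y hy m hm1 hmn).2 hxy]
  · have hmm' : m ≠ m' := fun h => hst (hms ▸ hmt ▸ h ▸ rfl)
    rcases hw with rfl | rfl <;> rcases hw' with h | h
    · exact hmm' ((hinj m m' hm1 hmn hm1' hmn').1 h)
    · exact (hinj m m' hm1 hmn hm1' hmn').2.2 h
    · exact (hinj m' m hm1' hmn' hm1 hmn).2.2 h.symm
    · exact hmm' ((hinj m m' hm1 hmn hm1' hmn').2.1 h)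

theorem IsLobsterA.subtree_phi_subset_phiRegion_of_hub (hA : IsLobsterA n T u v) (hn : Even n)
    {j s k : ℕ} (hk1 : 1 ≤ k) (hkn : k ≤ n - 1)
    (hs : ∀ x ∈ Xset n, phi j x = s → ∀ m ∈ Set.uIcc (spineIndex n x) k,
      (if m < j then 0 else 5) = s) :
    subtree T {x | phi j x = s} ⊆ phiRegion n j T u v s := by
  refine subtree_subset_of_forall_walk T (u k) fun x hx => ?_
  obtain ⟨hm1, hmn⟩ := spineIndex_mem hn hx.2
  obtain ⟨q, hq⟩ := hA.exists_walk_leaf_u hn hx.2 hk1 hkn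
  refine ⟨q, fun w hw => ?_⟩
  rcases hq w hw with rfl | rfl | ⟨m, hm, rfl⟩
  · exact Or.inl ⟨x, hx, rfl⟩
  · exact Or.inr ⟨_, hm1, hmn, Or.inr rfl, hs x hx.2 hx.1 _ Set.left_mem_uIcc⟩
  · have hm' := Set.mem_uIcc.mp hm
    exact Or.inr ⟨m, by omega, by omega, Or.inl rfl, hs x hx.2 hx.1 m hm⟩

theorem IsLobsterA.subtree_phi_subset_phiRegion (hA : IsLobsterA n T u v) (hn : Even n)
    (hn2 : 2 ≤ n) {j : ℕ} (hj : j ≤ n - 1) (s : ℕ) :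
    subtree T {x | phi j x = s} ⊆ phiRegion n j T u v s := by
  by_cases h0 : s = 0
  · subst h0
    refine hA.subtree_phi_subset_phiRegion_of_hub hn le_rfl (by omega) fun x hx hx0 m hm => ?_
    have hlt := spineIndex_lt_of_phi_eq_zero hx hx0
    have hmem := spineIndex_mem hn hx
    rw [if_pos (by rw [Set.mem_uIcc] at hm; omega)]
  by_cases h5 : s = 5
  · subst h5
    refine hA.subtree_phi_subset_phiRegion_of_hub hn (by omega) le_rfl fun x hx hx5 m hm => ?_
    have hle := le_spineIndex_of_phi_eq_five hj hx hx5
    rw [if_neg (by rw [Set.mem_uIcc] at hm; omega)]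
  · exact (subtree_subset_image_of_subsingleton T
      ((phi_fiber_subsingleton h0 h5).anti Set.inter_subset_left)).trans Set.subset_union_left

end Lobster

theorem lobsterA_displays_phi_general (n : ℕ) (hn : Even n) (hn6 : 6 ≤ n)
    (T : PhyloTree (Xset n)) (u v : ℕ → T.V) (hA : IsLobsterA n T u v)
    (j : ℕ) (hj' : j ≤ n - 1) :
    displays T (phi j) :=
  displays_of_subtree_subset T (phiRegion n j T u v) (hA.pairwise_disjoint_phiRegion j)
    (hA.subtree_phi_subset_phiRegion hn (by omega) hj')

theorem lobsterA_displays_phi (n : ℕ) (hn : Even n) (hn6 : 6 ≤ n)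
    (T : PhyloTree (Xset n)) (u v : ℕ → T.V) (hA : IsLobsterA n T u v)
    (j : ℕ) (hj : 3 ≤ j) (hj' : j ≤ n - 1) :
    displays T (phi j) :=
  lobsterA_displays_phi_general n hn hn6 T u v hA j hj'

end PP
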